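/- arXiv:2112.05204 — 2 statements merged into one kernel-verified Lean document; each statement's English description precedes it below -/
import Mathlib

section
/- Let x, s ∈ ℍ with x ∉ [s], i.e. it is not the case that Re(x) = Re(s) and ‖x‖ = ‖s‖. Then x² − 2Re(s)x + ‖s‖² ≠ 0, s² − 2Re(x)s + ‖x‖² ≠ 0, and the two forms of the right slice hyperholomorphic Cauchy kernel agree: −(x − s̄)·(x² − 2Re(s)x + ‖s‖²)⁻¹ = (s² − 2Re(x)s + ‖x‖²)⁻¹·(s − x̄). -/
open Quaternion

lemma my_charpoly (q : Quaternion ℝ) :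
    q ^ 2 - 2 * (q.re : Quaternion ℝ) * q + ((‖q‖ ^ 2 : ℝ) : Quaternion ℝ) = 0 := by
  have h1 : ((‖q‖ ^ 2 : ℝ) : Quaternion ℝ) = star q * q := by
    rw [Quaternion.star_mul_self, sq, Quaternion.normSq_eq_norm_mul_self]
  have h2 : 2 * (q.re : Quaternion ℝ) = q + star q := by
    rw [Quaternion.self_add_star', Quaternion.coe_mul]
    norm_num
    left; norm_cast
  rw [h1, h2]; noncomm_ring

lemma my_nonvanish (x s : Quaternion ℝ) (h : ¬(x.re = s.re ∧ ‖x‖ = ‖s‖)) :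
    x ^ 2 - 2 * (s.re : Quaternion ℝ) * x + ((‖s‖ ^ 2 : ℝ) : Quaternion ℝ) ≠ 0 := by
  intro hA
  have hxn : ‖x‖ ^ 2 = normSq x := by rw [sq, ← Quaternion.normSq_eq_norm_mul_self]
  have hsn : ‖s‖ ^ 2 = normSq s := by rw [sq, ← Quaternion.normSq_eq_norm_mul_self]
  have h' : ¬(x.re = s.re ∧ (normSq x : ℝ) = normSq s) := by
    rintro ⟨h1, h2⟩
    exact h ⟨h1, by
      have hq : ‖x‖ ^ 2 = ‖s‖ ^ 2 := by rw [hxn, hsn]; exact h2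
      nlinarith [norm_nonneg x, norm_nonneg s]⟩
  have h2' : (2 : Quaternion ℝ) = ((2 : ℝ) : Quaternion ℝ) := by norm_cast
  rw [hsn, h2', ← Quaternion.coe_mul] at hA
  have h0 := congrArg QuaternionAlgebra.re hA
  have h1 := congrArg QuaternionAlgebra.imI hA
  have h2 := congrArg QuaternionAlgebra.imJ hA
  have h3 := congrArg QuaternionAlgebra.imK hA
  simp [pow_two, Quaternion.normSq_def'] at h0 h1 h2 h3
  have hsq : (s.re) ^ 2 ≤ (normSq s : ℝ) := by
    simp only [Quaternion.normSq_def']; nlinarith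
  simp only [Quaternion.normSq_def'] at h'
  by_cases hre : x.re = s.re
  · exact h' ⟨hre, by rw [hre] at h0 ⊢; nlinarith⟩
  · have hb : x.imI = 0 := by
      have e : x.imI * (2 * (x.re - s.re)) = 0 := by linear_combination h1
      rcases mul_eq_zero.mp e with he | he
      · exact he
      · exact absurd (by linarith) hre
    have hc : x.imJ = 0 := by
      have e : x.imJ * (2 * (x.re - s.re)) = 0 := by linear_combination h2
      rcases mul_eq_zero.mp e with he | he
      · exact he
      · exact absurd (by linarith) hre
    have hd : x.imK = 0 := by
      have e : x.imK * (2 * (x.re - s.re)) = 0 := by linear_combination h3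
      rcases mul_eq_zero.mp e with he | he
      · exact he
      · exact absurd (by linarith) hre
    have h4 : (x.re - s.re) ^ 2 = 0 := le_antisymm (by nlinarith) (sq_nonneg _)
    exact hre (by have := sq_eq_zero_iff.mp h4; linarith)

lemma my_key (x s : Quaternion ℝ) :
    (s ^ 2 - 2 * (x.re : Quaternion ℝ) * s + ((‖x‖ ^ 2 : ℝ) : Quaternion ℝ)) * (-(x - star s))
      = (s - star x) * (x ^ 2 - 2 * (s.re : Quaternion ℝ) * x + ((‖s‖ ^ 2 : ℝ) : Quaternion ℝ)) := by
  have hxn : ((‖x‖ ^ 2 : ℝ) : Quaternion ℝ) = ((normSq x : ℝ) : Quaternion ℝ) := by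
    rw [sq, ← Quaternion.normSq_eq_norm_mul_self]
  have hsn : ((‖s‖ ^ 2 : ℝ) : Quaternion ℝ) = ((normSq s : ℝ) : Quaternion ℝ) := by
    rw [sq, ← Quaternion.normSq_eq_norm_mul_self]
  have h2' : (2 : Quaternion ℝ) = ((2 : ℝ) : Quaternion ℝ) := by norm_cast
  rw [hxn, hsn, h2', ← Quaternion.coe_mul, ← Quaternion.coe_mul]
  ext <;>
    simp [pow_two, Quaternion.normSq_def', Quaternion.re_mul, Quaternion.imI_mul,
      Quaternion.imJ_mul, Quaternion.imK_mul] <;>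
    ring

/-- the two forms of the right slice hyperholomorphic Cauchy kernel agree
for quaternions `x ∉ [s]`. -/
theorem stmt_3 (x s : Quaternion ℝ)
    (h : ¬(x.re = s.re ∧ ‖x‖ = ‖s‖)) :
    x ^ 2 - 2 * (s.re : Quaternion ℝ) * x + ((‖s‖ ^ 2 : ℝ) : Quaternion ℝ) ≠ 0 ∧
    s ^ 2 - 2 * (x.re : Quaternion ℝ) * s + ((‖x‖ ^ 2 : ℝ) : Quaternion ℝ) ≠ 0 ∧
    -(x - star s) * (x ^ 2 - 2 * (s.re : Quaternion ℝ) * x + ((‖s‖ ^ 2 : ℝ) : Quaternion ℝ))⁻¹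
      = (s ^ 2 - 2 * (x.re : Quaternion ℝ) * s + ((‖x‖ ^ 2 : ℝ) : Quaternion ℝ))⁻¹ * (s - star x) := by
  have h2 : ¬(s.re = x.re ∧ ‖s‖ = ‖x‖) := fun ⟨h1, h2⟩ => h ⟨h1.symm, h2.symm⟩
  have hA := my_nonvanish x s h
  have hB := my_nonvanish s x h2
  refine ⟨hA, hB, ?_⟩
  set A := x ^ 2 - 2 * (s.re : Quaternion ℝ) * x + ((‖s‖ ^ 2 : ℝ) : Quaternion ℝ) with hAdef
  set B := s ^ 2 - 2 * (x.re : Quaternion ℝ) * s + ((‖x‖ ^ 2 : ℝ) : Quaternion ℝ) with hBdef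
  have key : B * (-(x - star s)) = (s - star x) * A := my_key x s
  calc -(x - star s) * A⁻¹
      = B⁻¹ * (B * (-(x - star s)) * A⁻¹) := by
        rw [← mul_assoc, ← mul_assoc, inv_mul_cancel₀ hB, one_mul]
    _ = B⁻¹ * ((s - star x) * A * A⁻¹) := by rw [key]
    _ = B⁻¹ * (s - star x) := by rw [mul_assoc, mul_inv_cancel₀ hA, mul_one]
end

section
/- (Spectral mapping theorem for intrinsic polynomials) Let Y be a complex Banach space, A a bounded ℝ-linear operator on Y, and P a polynomial with real coefficients. Let P(A) denote the bounded ℝ-linear operator obtained by evaluating P at A, and for s ∈ ℂ let P(s) denote the evaluation of P at s. Then σ_S(P(A)) = P(σ_S(A)) = {P(s) : s ∈ σ_S(A)}. -/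
open Polynomial Filter

section Pairs
variable {R : Type*} [Ring R]
def pmul (p q : R × R) : R × R := (p.1*q.1 - p.2*q.2, p.1*q.2 + p.2*q.1)
def csm [Module ℝ R] (c : ℂ) (p : R × R) : R × R :=
  (c.re • p.1 - c.im • p.2, c.re • p.2 + c.im • p.1)
lemma passoc (p q t : R × R) : pmul (pmul p q) t = pmul p (pmul q t) := by
  simp only [pmul, Prod.mk.injEq]; constructor <;> noncomm_ring
lemma psub_right (p q t : R × R) : pmul p (q - t) = pmul p q - pmul p t := by
  simp only [pmul, Prod.fst_sub, Prod.snd_sub, Prod.mk_sub_mk, Prod.mk.injEq]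
  constructor <;> noncomm_ring
lemma psub_left (p q t : R × R) : pmul (p - q) t = pmul p t - pmul q t := by
  simp only [pmul, Prod.fst_sub, Prod.snd_sub, Prod.mk_sub_mk, Prod.mk.injEq]
  constructor <;> noncomm_ring
lemma pone_right (p : R × R) : pmul p (1, 0) = p := by simp [pmul]
lemma pone_left (p : R × R) : pmul (1, 0) p = p := by simp [pmul]
lemma pcsm_right [Module ℝ R] [SMulCommClass ℝ R R] [IsScalarTower ℝ R R]
    (c : ℂ) (p q : R × R) : pmul p (csm c q) = csm c (pmul p q) := by
  simp only [pmul, csm, Prod.mk.injEq, mul_smul_comm, mul_sub, mul_add]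
  constructor <;> module
lemma pcsm_left [Module ℝ R] [SMulCommClass ℝ R R] [IsScalarTower ℝ R R]
    (c : ℂ) (p q : R × R) : pmul (csm c p) q = csm c (pmul p q) := by
  simp only [pmul, csm, Prod.mk.injEq, smul_mul_assoc, sub_mul, add_mul]
  constructor <;> module
end Pairs

/-- The `Φ` functional -/
noncomputable def Phi {R : Type*} [NormedRing R] [NormedAlgebra ℝ R]
    (φ : R →L[ℝ] ℝ) (p : R × R) : ℂ := (φ p.1 : ℂ) + (φ p.2 : ℝ) * Complex.I

lemma Phi_sub {R : Type*} [NormedRing R] [NormedAlgebra ℝ R] (φ : R →L[ℝ] ℝ) (p q : R × R) :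
    Phi φ (p - q) = Phi φ p - Phi φ q := by
  simp only [Phi, Prod.fst_sub, Prod.snd_sub, map_sub]
  push_cast
  try ring

lemma Phi_csm {R : Type*} [NormedRing R] [NormedAlgebra ℝ R] (φ : R →L[ℝ] ℝ) (c : ℂ) (p : R × R) :
    Phi φ (csm c p) = c * Phi φ p := by
  simp only [Phi, csm, map_sub, map_add, map_smul]
  apply Complex.ext <;> simp [smul_eq_mul] <;> ring

set_option maxHeartbeats 1000000 in
theorem sspec_nonempty {R : Type*} [NormedRing R] [NormedAlgebra ℝ R] [CompleteSpace R]
    [Nontrivial R] (a : R) :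
    ∃ s : ℂ, ¬ IsUnit (a^2 - (2*s.re)•a + (‖s‖^2)•(1:R)) := by
  by_contra hcon
  push_neg at hcon
  set q : ℂ → R := fun s => a^2 - (2*s.re)•a + (‖s‖^2)•(1:R) with hq
  set iv : ℂ → R := fun s => Ring.inverse (q s) with hiv
  have hqi : ∀ s, q s * iv s = 1 := fun s => Ring.mul_inverse_cancel _ (hcon s)
  have hiq : ∀ s, iv s * q s = 1 := fun s => Ring.inverse_mul_cancel _ (hcon s)
  have habs : ∀ s : ℂ, ‖s‖ ^ 2 = s.re^2 + s.im^2 := fun s => by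
    rw [Complex.sq_norm, Complex.normSq_apply]; ring
  have hqa : ∀ s, a * q s = q s * a := by
    intro s
    simp only [hq, mul_sub, sub_mul, mul_add, add_mul, smul_mul_assoc, mul_smul_comm,
      one_mul, mul_one, pow_two, mul_assoc]
  have hcomm : ∀ s, a * iv s = iv s * a := by
    intro s
    calc a * iv s = iv s * q s * (a * iv s) := by rw [hiq, one_mul]
      _ = iv s * (q s * a) * iv s := by noncomm_ring
      _ = iv s * (a * q s) * iv s := by rw [hqa]
      _ = iv s * a * (q s * iv s) := by noncomm_ring
      _ = iv s * a := by rw [hqi, mul_one]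
  set D : ℂ → R := fun s => a - s.re • 1 with hD
  have hDiv : ∀ s, iv s * D s = D s * iv s := by
    intro s
    simp only [hD, mul_sub, sub_mul, mul_smul_comm, smul_mul_assoc, mul_one, one_mul,
      hcomm s]
  have hqD : ∀ s, D s * D s + (s.im^2)•(1:R) = q s := by
    intro s
    simp only [hD, hq, habs s]
    simp only [mul_sub, sub_mul, smul_mul_assoc, mul_smul_comm, one_mul, mul_one,
      pow_two, smul_smul]
    module
  set r : ℂ → R × R := fun s => (D s * iv s, s.im • iv s) with hr
  set e : ℂ → R × R := fun s => (D s, (-s.im) • 1) with he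
  have hre : ∀ s, pmul (r s) (e s) = (1, 0) := by
    intro s
    simp only [pmul, hr, he, Prod.mk.injEq]
    constructor
    · have h1 : D s * iv s * D s = D s * D s * iv s := by
        rw [mul_assoc, hDiv s, ← mul_assoc]
      have h2 : s.im • iv s * (-s.im) • (1:R) = -((s.im^2) • iv s) := by
        simp [smul_mul_assoc, mul_smul_comm, smul_smul]
        try module
      rw [h1, h2, sub_neg_eq_add]
      calc D s * D s * iv s + (s.im^2) • iv s
          = (D s * D s + (s.im^2) • 1) * iv s := by
            simp [add_mul, smul_mul_assoc]
        _ = 1 := by rw [hqD s, hqi s]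
    · have h1 : D s * iv s * (-s.im) • (1:R) = -(s.im • (D s * iv s)) := by
        simp [mul_smul_comm, smul_smul]
        try module
      have h2 : s.im • iv s * D s = s.im • (D s * iv s) := by
        rw [smul_mul_assoc, hDiv s]
      rw [h1, h2]; module
  have her : ∀ s, pmul (e s) (r s) = (1, 0) := by
    intro s
    simp only [pmul, hr, he, Prod.mk.injEq]
    constructor
    · have h2 : (-s.im) • (1:R) * s.im • iv s = -((s.im^2) • iv s) := by
        simp [smul_mul_assoc, mul_smul_comm, smul_smul]
        try module
      rw [h2, sub_neg_eq_add, ← mul_assoc]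
      calc D s * D s * iv s + (s.im^2) • iv s
          = (D s * D s + (s.im^2) • 1) * iv s := by
            simp [add_mul, smul_mul_assoc]
        _ = 1 := by rw [hqD s, hqi s]
    · have h1 : D s * (s.im • iv s) = s.im • (D s * iv s) := mul_smul_comm _ _ _
      have h2 : (-s.im) • (1:R) * (D s * iv s) = -(s.im • (D s * iv s)) := by
        simp [smul_mul_assoc]
      rw [h1, h2]; module
  have he_sub : ∀ w s, e s - e w = csm (w - s) ((1:R), (0:R)) := by
    intro w s
    simp only [he, csm, Prod.mk_sub_mk, Prod.mk.injEq, Complex.sub_re, Complex.sub_im,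
      smul_zero, sub_zero, zero_add, hD]
    constructor <;> module
  have hres : ∀ w s, r w - r s = csm (w - s) (pmul (r w) (r s)) := by
    intro w s
    calc r w - r s
        = pmul (r w) (pmul (e s) (r s)) - pmul (pmul (r w) (e w)) (r s) := by
          rw [her s, pone_right, hre w, pone_left]
      _ = pmul (r w) (pmul (e s) (r s)) - pmul (r w) (pmul (e w) (r s)) := by
          rw [passoc]
      _ = pmul (r w) (pmul (e s - e w) (r s)) := by
          rw [psub_left, psub_right]
      _ = pmul (r w) (pmul (csm (w - s) (1, 0)) (r s)) := by rw [he_sub]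
      _ = csm (w - s) (pmul (r w) (r s)) := by
          rw [pcsm_left, pone_left, pcsm_right]
  -- continuity
  have cont_q : Continuous q := by
    apply Continuous.add
    apply Continuous.sub continuous_const
    · exact (continuous_const.mul Complex.continuous_re).smul continuous_const
    · exact ((continuous_norm.pow 2)).smul continuous_const
  have cont_iv : Continuous iv := by
    rw [continuous_iff_continuousAt]
    intro s
    have h1 : ContinuousAt Ring.inverse (q s) := by
      have := NormedRing.inverse_continuousAt (hcon s).unit
      rwa [(hcon s).unit_spec] at this
    exact h1.comp cont_q.continuousAt
  have cont_D : Continuous D := by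
    exact continuous_const.sub ((Complex.continuous_re).smul continuous_const)
  have cont_r : Continuous r :=
    Continuous.prodMk ((cont_D).mul cont_iv) (Complex.continuous_im.smul cont_iv)
  -- the main Liouville argument, for every real functional φ
  have hg0 : ∀ φ : R →L[ℝ] ℝ, ∀ s : ℂ, Phi φ (r s) = 0 := by
    intro φ
    set g : ℂ → ℂ := fun s => Phi φ (r s) with hgdef
    have cont_Phi : Continuous (Phi φ : R × R → ℂ) := by
      show Continuous fun p : R × R => (φ p.1 : ℂ) + (φ p.2 : ℝ) * Complex.I
      exact (Complex.continuous_ofReal.comp (φ.continuous.comp continuous_fst)).add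
        ((Complex.continuous_ofReal.comp (φ.continuous.comp continuous_snd)).mul
          continuous_const)
    have cont_g : Continuous g := cont_Phi.comp cont_r
    have hderiv : ∀ s, HasDerivAt g (Phi φ (pmul (r s) (r s))) s := by
      intro s
      rw [hasDerivAt_iff_tendsto_slope]
      have heq : ∀ w ∈ ({s}ᶜ : Set ℂ), slope g s w = Phi φ (pmul (r w) (r s)) := by
        intro w hw
        have hw' : w - s ≠ 0 := sub_ne_zero.mpr hw
        rw [slope_def_field]
        have : g w - g s = (w - s) * Phi φ (pmul (r w) (r s)) := by
          rw [hgdef]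
          rw [← Phi_sub, hres w s, Phi_csm]
        rw [this]
        field_simp
      have hcont2 : Continuous fun w => Phi φ (pmul (r w) (r s)) := by
        apply cont_Phi.comp
        apply Continuous.prodMk
        · exact ((cont_r.fst.mul continuous_const).sub (cont_r.snd.mul continuous_const))
        · exact ((cont_r.fst.mul continuous_const).add (cont_r.snd.mul continuous_const))
      apply Filter.Tendsto.congr' _ ((hcont2.continuousAt).tendsto.mono_left nhdsWithin_le_nhds)
      exact (eventually_nhdsWithin_of_forall heq).mono (fun w h => h.symm)
    -- bound on the inverse
    have hivb : ∀ s : ℂ, 4*‖a‖+1 ≤ ‖s‖ →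
        ‖iv s‖ ≤ 3*(‖(1:R)‖+1)/(‖s‖)^2 := by
      intro s hs
      have hid : (‖s‖^2)•iv s = 1 - a^2 * iv s + (2*s.re)•(a*iv s) := by
        have h1 := hqi s
        have hexp : q s * iv s
            = a^2*(iv s) - (2*s.re)•(a*(iv s)) + (‖s‖^2)•(iv s) := by
          simp only [hq, sub_mul, add_mul, smul_mul_assoc, mul_assoc, pow_two, one_mul]
        rw [hexp] at h1
        rw [← h1]; abel
      set N := ‖a‖ with hN
      set C1 := ‖(1:R)‖ with hC1
      set A := ‖s‖ with hA
      set X := ‖iv s‖ with hX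
      have hXnn : 0 ≤ X := norm_nonneg _
      have hNnn : 0 ≤ N := norm_nonneg _
      have hC1nn : 0 ≤ C1 := norm_nonneg _
      have hA1 : 1 ≤ A := by nlinarith
      have hineq : A^2 * X ≤ C1 + N^2*X + 2*A*N*X := by
        have e1 : A^2 * X = ‖(‖s‖^2)•iv s‖ := by
          rw [norm_smul, Real.norm_eq_abs, abs_of_nonneg (by positivity)]
        rw [e1, hid]
        calc ‖1 - a^2 * iv s + (2*s.re)•(a*iv s)‖
            ≤ ‖(1:R)‖ + ‖a^2 * iv s‖ + ‖(2*s.re)•(a*iv s)‖ := by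
              apply le_trans (norm_add_le _ _)
              have := norm_sub_le (1:R) (a^2 * iv s)
              linarith
          _ ≤ C1 + N^2*X + 2*A*N*X := by
              have b1 : ‖a^2 * iv s‖ ≤ N^2 * X := by
                calc ‖a^2 * iv s‖ ≤ ‖a^2‖ * X := norm_mul_le _ _
                  _ ≤ N^2 * X := by
                    apply mul_le_mul_of_nonneg_right _ hXnn
                    calc ‖a^2‖ = ‖a*a‖ := by rw [pow_two]
                      _ ≤ N*N := norm_mul_le _ _
                      _ = N^2 := (pow_two N).symm
              have b2 : ‖(2*s.re)•(a*iv s)‖ ≤ 2*A*N*X := by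
                rw [norm_smul, Real.norm_eq_abs]
                have : |2*s.re| ≤ 2*A := by
                  rw [abs_mul]
                  have := Complex.abs_re_le_norm s
                  rw [abs_two]
                  nlinarith [abs_nonneg s.re]
                calc |2*s.re| * ‖a*iv s‖ ≤ (2*A) * (N*X) := by
                      apply mul_le_mul this (norm_mul_le _ _) (norm_nonneg _)
                      positivity
                  _ = 2*A*N*X := by ring
              linarith
      rw [le_div_iff₀ (by positivity : (0:ℝ) < A^2)]
      nlinarith [mul_nonneg (mul_nonneg (by nlinarith : (0:ℝ) ≤ A - 4*N)
        (by nlinarith : (0:ℝ) ≤ 9*A + 4*N)) hXnn]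
    -- bound on g
    set N := ‖a‖ with hN
    set C1 := ‖(1:R)‖ with hC1
    set M := 3*‖φ‖*(N+C1+1)*(C1+1) with hM
    have hMnn : 0 ≤ M := by
      have : 0 ≤ ‖φ‖ := norm_nonneg _
      have : 0 ≤ N := norm_nonneg _
      have : 0 ≤ C1 := norm_nonneg _
      positivity
    have hgb : ∀ s : ℂ, 4*N+1 ≤ ‖s‖ → ‖g s‖ ≤ M / ‖s‖ := by
      intro s hs
      set A := ‖s‖ with hA
      have hA1 : 1 ≤ A := by nlinarith [norm_nonneg a]
      have hX := hivb s hs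
      set X := ‖iv s‖ with hX2
      have hXnn : 0 ≤ X := norm_nonneg _
      have hgle : ‖g s‖ ≤ |φ (D s * iv s)| + |φ (s.im • iv s)| := by
        rw [hgdef]
        show ‖(φ ((r s).1) : ℂ) + (φ ((r s).2) : ℝ) * Complex.I‖ ≤ _
        apply le_trans (norm_add_le _ _)
        rw [Complex.norm_real, norm_mul, Complex.norm_I, mul_one, Complex.norm_real]
        simp only [hr, Real.norm_eq_abs, le_refl]
      have hDb : ‖D s‖ ≤ N + A*C1 := by
        simp only [hD]
        apply le_trans (norm_sub_le _ _)
        rw [norm_smul, Real.norm_eq_abs]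
        have h1 : |s.re| ≤ A := Complex.abs_re_le_norm s
        have : 0 ≤ C1 := norm_nonneg _
        nlinarith [abs_nonneg s.re]
      have h1 : |φ (D s * iv s)| ≤ ‖φ‖ * ((N + A*C1) * X) := by
        calc |φ (D s * iv s)| ≤ ‖φ‖ * ‖D s * iv s‖ := φ.le_opNorm _
          _ ≤ ‖φ‖ * ((N + A*C1) * X) := by
            apply mul_le_mul_of_nonneg_left _ (norm_nonneg φ)
            calc ‖D s * iv s‖ ≤ ‖D s‖ * X := norm_mul_le _ _
              _ ≤ (N + A*C1) * X := by
                apply mul_le_mul_of_nonneg_right hDb hXnn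
      have h2 : |φ (s.im • iv s)| ≤ ‖φ‖ * (A * X) := by
        calc |φ (s.im • iv s)| ≤ ‖φ‖ * ‖s.im • iv s‖ := φ.le_opNorm _
          _ ≤ ‖φ‖ * (A * X) := by
            apply mul_le_mul_of_nonneg_left _ (norm_nonneg φ)
            rw [norm_smul, Real.norm_eq_abs]
            exact mul_le_mul_of_nonneg_right (Complex.abs_im_le_norm s) hXnn
      have hNnn : 0 ≤ N := norm_nonneg _
      have hC1nn : 0 ≤ C1 := norm_nonneg _
      have hga : ‖g s‖ ≤ ‖φ‖ * ((N + A*C1) * X) + ‖φ‖ * (A * X) :=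
        le_trans hgle (add_le_add h1 h2)
      have hXA : X * A^2 ≤ 3*(C1+1) := by
        have := (le_div_iff₀ (by positivity : (0:ℝ) < A^2)).mp hX
        linarith
      rw [le_div_iff₀ (by positivity : (0:ℝ) < A)]
      have hphinn : 0 ≤ ‖φ‖ := norm_nonneg _
      calc ‖g s‖ * A ≤ (‖φ‖ * ((N + A*C1) * X) + ‖φ‖ * (A * X)) * A :=
            mul_le_mul_of_nonneg_right hga (by positivity)
        _ = ‖φ‖ * (N*(X*A) + (C1+1)*(X*A^2)) := by ring
        _ ≤ ‖φ‖ * (N*(X*A^2) + (C1+1)*(X*A^2)) := by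
            have hXA2 : X*A ≤ X*A^2 := by nlinarith [mul_nonneg (mul_nonneg hXnn (by linarith : (0:ℝ) ≤ A)) (by linarith : (0:ℝ) ≤ A - 1)]
            have : N*(X*A) ≤ N*(X*A^2) := mul_le_mul_of_nonneg_left hXA2 hNnn
            nlinarith
        _ = ‖φ‖ * (N + (C1+1)) * (X*A^2) := by ring
        _ ≤ ‖φ‖ * (N + (C1+1)) * (3*(C1+1)) := by
            apply mul_le_mul_of_nonneg_left hXA (by positivity)
        _ = M := by rw [hM]; ring
    -- boundedness of the range of g
    have hrange : Set.range g ⊆ g '' (Metric.closedBall 0 (4*N+1)) ∪ Metric.closedBall 0 M := by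
      rintro - ⟨s, rfl⟩
      by_cases hcase : ‖s‖ ≤ 4*N+1
      · left
        exact Set.mem_image_of_mem g (by
          rw [Metric.mem_closedBall, Complex.dist_eq, sub_zero]; exact hcase)
      · right
        push_neg at hcase
        rw [Metric.mem_closedBall, dist_zero_right]
        have h := hgb s hcase.le
        have hA1 : (1:ℝ) ≤ ‖s‖ := by nlinarith [norm_nonneg a]
        calc ‖g s‖ ≤ M / ‖s‖ := h
          _ ≤ M := by
            rw [div_le_iff₀ (by linarith)]
            nlinarith
    have hbdd : Bornology.IsBounded (Set.range g) := by
      apply Bornology.IsBounded.subset _ hrange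
      exact (((isCompact_closedBall (0:ℂ) _).image cont_g).isBounded).union
        Metric.isBounded_closedBall
    have hdiff : Differentiable ℂ g := fun s => (hderiv s).differentiableAt
    have hconst : ∀ z w : ℂ, g z = g w := hdiff.apply_eq_apply_of_bounded hbdd
    -- the constant value is zero
    have hzero : g 0 = 0 := by
      by_contra hne
      have hpos : 0 < ‖g 0‖ := norm_pos_iff.mpr hne
      set t : ℝ := max (4*N+1) (M / (‖g 0‖/2)) with ht
      have ht1 : 4*N+1 ≤ t := le_max_left _ _
      have htpos : 0 < t := by nlinarith [norm_nonneg a]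
      have habst : ‖(t:ℂ)‖ = t := by
        rw [Complex.norm_real, Real.norm_eq_abs, abs_of_nonneg htpos.le]
      have h := hgb (t:ℂ) (by rw [habst]; exact ht1)
      rw [habst] at h
      have hgt : g (t:ℂ) = g 0 := hconst _ _
      rw [hgt] at h
      have ht2 : M / (‖g 0‖/2) ≤ t := le_max_right _ _
      have hMt : M / t ≤ ‖g 0‖/2 := by
        rw [div_le_iff₀ htpos]
        rw [div_le_iff₀ (by linarith : (0:ℝ) < ‖g 0‖/2)] at ht2
        linarith
      linarith
    intro s
    show g s = 0
    rw [hconst s 0, hzero]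
  -- extract the contradiction
  have hivI : iv Complex.I = 0 := by
    apply NormedSpace.eq_zero_of_forall_dual_eq_zero ℝ
    intro φ
    have him : φ (iv Complex.I) = (Phi φ (r Complex.I)).im := by
      simp [Phi, hr]
    rw [hg0 φ Complex.I] at him
    simpa using him
  have h1 := hqi Complex.I
  rw [hivI, mul_zero] at h1
  exact zero_ne_one h1


noncomputable def qq (z : ℂ) : ℝ[X] := X^2 - C (2*z.re) * X + C (‖z‖^2)

lemma map_qq (z : ℂ) : (qq z).map (algebraMap ℝ ℂ) = (X - C z) * (X - C ((starRingEnd ℂ) z)) := by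
  have h1 : z + (starRingEnd ℂ) z = ((2*z.re : ℝ) : ℂ) := by
    rw [Complex.add_conj]
  have h2 : z * (starRingEnd ℂ) z = ((‖z‖^2 : ℝ) : ℂ) := by
    rw [Complex.mul_conj, Complex.sq_norm]
  have h3 : (X - C z) * (X - C ((starRingEnd ℂ) z))
      = X^2 - C (z + (starRingEnd ℂ) z) * X + C (z * (starRingEnd ℂ) z) := by
    simp only [C_add, C_mul]; ring
  rw [h3, h1, h2]
  simp [qq, Polynomial.map_sub, Polynomial.map_add, Polynomial.map_mul, Polynomial.map_pow, map_C, map_X]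

lemma factA (P : ℝ[X]) (hP : P.natDegree ≠ 0) (s : ℂ) :
    (qq s).comp P = C (P.leadingCoeff^2) *
      (((P.map (algebraMap ℝ ℂ) - C s).roots).map qq).prod := by
  set pC := P.map (algebraMap ℝ ℂ) with hpC
  have hinj : Function.Injective (algebraMap ℝ ℂ) := RingHom.injective _
  apply Polynomial.map_injective _ hinj
  have hdegpC : pC.natDegree = P.natDegree := natDegree_map_eq_of_injective hinj P
  have hps : (pC - C s).natDegree = P.natDegree := by rw [natDegree_sub_C, hdegpC]
  have hpCne : pC ≠ 0 := fun h => by rw [h] at hdegpC; simp at hdegpC; exact hP hdegpC.symm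
  have hne : pC - C s ≠ 0 := fun h => by rw [h] at hps; simp at hps; exact hP hps.symm
  have hdc : (C s).degree < pC.degree := by
    apply lt_of_le_of_lt degree_C_le
    rw [degree_eq_natDegree hpCne, hdegpC]
    exact_mod_cast Nat.pos_of_ne_zero hP
  have hlc : (pC - C s).leadingCoeff = (algebraMap ℝ ℂ) P.leadingCoeff := by
    rw [leadingCoeff_sub_of_degree_lt hdc, hpC, leadingCoeff_map]
  have hsplits : Splits (pC - C s) := IsAlgClosed.splits _
  have hfac := hsplits.eq_prod_roots
  rw [hlc] at hfac
  set M := (pC - C s).roots with hM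
  -- conjugated identity
  have hconjpC : pC.map (starRingEnd ℂ) = pC := by
    rw [hpC, Polynomial.map_map]
    congr 1
    ext r
    simp [Complex.conj_ofReal]
  have hfac2 : pC - C ((starRingEnd ℂ) s)
      = C ((algebraMap ℝ ℂ) P.leadingCoeff) * (M.map (fun z => X - C ((starRingEnd ℂ) z))).prod := by
    have := congrArg (Polynomial.map (starRingEnd ℂ)) hfac
    rw [Polynomial.map_sub, hconjpC, map_C, Polynomial.map_mul, map_C,
      Polynomial.map_multiset_prod, Multiset.map_map] at this
    rw [this]
    congr 2
    · simp [Complex.conj_ofReal]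
    · apply Multiset.map_congr rfl
      intro z _
      simp [Polynomial.map_sub, map_C, map_X]
  -- main computation
  rw [Polynomial.map_comp, map_qq, Polynomial.map_mul, map_C]
  rw [mul_comp, sub_comp, sub_comp, X_comp, C_comp, C_comp]
  rw [← hpC] at *
  rw [hfac, hfac2]
  rw [Polynomial.map_multiset_prod, Multiset.map_map]
  have : Multiset.map (Polynomial.map (algebraMap ℝ ℂ) ∘ qq) M
      = Multiset.map (fun z => (X - C z) * (X - C ((starRingEnd ℂ) z))) M :=
    Multiset.map_congr rfl (fun z _ => by simp [map_qq])
  rw [this, Multiset.prod_map_mul]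
  push_cast [map_pow]
  ring

lemma aeval_qq {B : Type*} [Ring B] [Algebra ℝ B] (A : B) (z : ℂ) :
    aeval A (qq z) = A^2 - (2*z.re) • A + (‖z‖^2) • (1:B) := by
  simp [qq, Algebra.smul_def, mul_one]

lemma units_iff {B : Type*} [Ring B] [Algebra ℝ B] (A : B) (M : Multiset ℂ) :
    IsUnit (aeval A ((M.map qq).prod)) ↔ ∀ z ∈ M, IsUnit (aeval A (qq z)) := by
  induction M using Multiset.induction_on with
  | empty => simp
  | cons z M ih =>
    rw [Multiset.map_cons, Multiset.prod_cons, map_mul]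
    have hc : Commute (aeval A (qq z)) (aeval A ((M.map qq).prod)) := by
      unfold Commute SemiconjBy
      rw [← map_mul, ← map_mul, mul_comm]
    rw [hc.isUnit_mul_iff, ih]
    simp [or_imp, forall_and]

lemma key_nonconst {B : Type*} [Ring B] [Algebra ℝ B] (A : B) (P : ℝ[X])
    (hP : P.natDegree ≠ 0) (s : ℂ) :
    IsUnit (aeval (aeval A P) (qq s)) ↔
      ∀ z ∈ (P.map (algebraMap ℝ ℂ) - C s).roots, IsUnit (aeval A (qq z)) := by
  rw [← aeval_comp, factA P hP s, map_mul, aeval_C]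
  have hlc : IsUnit ((algebraMap ℝ B) (P.leadingCoeff^2)) := by
    have h0 : P.leadingCoeff ≠ 0 := leadingCoeff_ne_zero.mpr (fun h => hP (by simp [h]))
    exact (IsUnit.map (algebraMap ℝ B) (isUnit_iff_ne_zero.mpr (pow_ne_zero 2 h0)))
  rw [← hlc.unit_spec, Units.isUnit_units_mul, units_iff]

lemma mem_roots_iff (P : ℝ[X]) (hP : P.natDegree ≠ 0) (s z : ℂ) :
    z ∈ (P.map (algebraMap ℝ ℂ) - C s).roots ↔ aeval z P = s := by
  have hinj : Function.Injective (algebraMap ℝ ℂ) := RingHom.injective _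
  have hps : (P.map (algebraMap ℝ ℂ) - C s).natDegree = P.natDegree := by
    rw [natDegree_sub_C, natDegree_map_eq_of_injective hinj]
  have hne : P.map (algebraMap ℝ ℂ) - C s ≠ 0 := fun h => by
    rw [h] at hps; simp at hps; exact hP hps.symm
  rw [mem_roots hne]
  unfold IsRoot
  rw [eval_sub, eval_C, sub_eq_zero, eval_map, ← aeval_def]



lemma smul_one_isUnit_iff {B : Type*} [Ring B] [Algebra ℝ B] [Nontrivial B] (k : ℝ) :
    IsUnit (k • (1:B)) ↔ k ≠ 0 := by
  constructor
  · intro h hk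
    rw [hk, zero_smul] at h
    exact not_isUnit_zero h
  · intro hk
    refine isUnit_iff_exists.mpr ⟨k⁻¹ • 1, ?_, ?_⟩
    · rw [smul_mul_smul, mul_one, mul_inv_cancel₀ hk, one_smul]
    · rw [smul_mul_smul, mul_one, inv_mul_cancel₀ hk, one_smul]

set_option synthInstance.maxHeartbeats 1000000 in
set_option maxHeartbeats 2000000 in
/-- spectral mapping theorem for intrinsic polynomials:
`σ_S(P(A)) = P(σ_S(A))` for a polynomial `P` with real coefficients. -/
theorem stmt_18 {Y : Type*} [NormedAddCommGroup Y] [NormedSpace ℂ Y] [CompleteSpace Y]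
    (A : Y →L[ℝ] Y) (P : Polynomial ℝ) :
    {s : ℂ | ¬ IsUnit ((Polynomial.aeval A P) ^ 2 - (2 * s.re) • (Polynomial.aeval A P)
        + (‖s‖ ^ 2) • (1 : Y →L[ℝ] Y))}
      = (fun s : ℂ => Polynomial.aeval s P) ''
        {s : ℂ | ¬ IsUnit (A ^ 2 - (2 * s.re) • A
          + (‖s‖ ^ 2) • (1 : Y →L[ℝ] Y))} := by
  classical
  ext s
  simp only [Set.mem_setOf_eq, Set.mem_image]
  by_cases hdeg : P.natDegree = 0
  · -- constant polynomial
    obtain ⟨c, hc⟩ : ∃ c, P = C c := ⟨P.coeff 0, eq_C_of_natDegree_eq_zero hdeg⟩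
    subst hc
    rcases subsingleton_or_nontrivial Y with hY | hY
    · have hsub : Subsingleton (Y →L[ℝ] Y) :=
        ⟨fun f g => by ext y; exact Subsingleton.elim _ _⟩
      constructor
      · intro h; exact absurd (isUnit_of_subsingleton _) h
      · rintro ⟨z, hz, -⟩; exact absurd (isUnit_of_subsingleton _) hz
    · have hRnt : Nontrivial (Y →L[ℝ] Y) := by
        obtain ⟨y, hy⟩ := exists_ne (0:Y)
        refine ⟨1, 0, fun h => hy ?_⟩
        have := DFunLike.congr_fun h y
        simpa using this
      have habs : ∀ z : ℂ, ‖z‖ ^ 2 = z.re^2 + z.im^2 := fun z => by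
        rw [Complex.sq_norm, Complex.normSq_apply]; ring
      have hexpr : (aeval A (C c)) ^ 2 - (2 * s.re) • (aeval A (C c))
          + (‖s‖ ^ 2) • (1 : Y →L[ℝ] Y)
          = ((s.re - c)^2 + s.im^2) • (1 : Y →L[ℝ] Y) := by
        rw [aeval_C, Algebra.algebraMap_eq_smul_one, pow_two, smul_mul_smul, one_mul,
          smul_smul, ← sub_smul, ← add_smul, habs s]
        congr 1
        ring
      rw [hexpr, smul_one_isUnit_iff, not_ne_iff]
      constructor
      · intro h
        obtain ⟨z, hz⟩ := sspec_nonempty A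
        refine ⟨z, hz, ?_⟩
        have hre : s.re = c ∧ s.im = 0 := by
          constructor <;> nlinarith [sq_nonneg (s.re - c), sq_nonneg s.im]
        rw [aeval_C]
        apply Complex.ext
        · simp [hre.1]
        · simp [hre.2]
      · rintro ⟨z, hz, hzs⟩
        rw [aeval_C] at hzs
        have h1 : s.re = c := by rw [← hzs]; simp
        have h2 : s.im = 0 := by rw [← hzs]; simp
        rw [h1, h2]; ring
  · -- nonconstant polynomial
    rw [show (aeval A P) ^ 2 - (2 * s.re) • (aeval A P)
        + (‖s‖ ^ 2) • (1 : Y →L[ℝ] Y) = aeval (aeval A P) (qq s)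
      from (aeval_qq _ s).symm]
    constructor
    · intro h
      rw [key_nonconst A P hdeg s] at h
      push_neg at h
      obtain ⟨z, hzmem, hz⟩ := h
      refine ⟨z, ?_, (mem_roots_iff P hdeg s z).mp hzmem⟩
      rwa [← aeval_qq A z]
    · rintro ⟨z, hz, hez⟩
      intro hu
      rw [key_nonconst A P hdeg s] at hu
      have := hu z ((mem_roots_iff P hdeg s z).mpr hez)
      rw [aeval_qq A z] at this
      exact hz this
end
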